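/- If Δτ > 0, then the family (s, z) ∈ ℤ² ↦ tg(s, z) G(η_s, ξ_z, Δτ) is absolutely summable; that is, ∑_{(s,z) ∈ ℤ²} tg(s, z) |G(η_s, ξ_z, Δτ)| < ∞. -/

import Mathlib

open Real MeasureTheory

noncomputable section

/-- Fourier transform of the jump density `b`. -/
def Bfun (b : ℝ → ℝ) (η : ℝ) : ℂ :=
  ∫ y : ℝ, (b y : ℂ) * Complex.exp (-(2 * (π : ℂ) * Complex.I * η * y))

/-- Fourier symbol `Ψ` of the Green's function. -/
def Psi (σZ σR ρ lam κ : ℝ) (b : ℝ → ℝ) (η ξ : ℝ) : ℂ :=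
  ((-(σZ ^ 2 / 2) * (2 * π * η) ^ 2 - ρ * σZ * σR * (2 * π * η) * (2 * π * ξ)
      - σR ^ 2 / 2 * (2 * π * ξ) ^ 2 - lam : ℝ) : ℂ)
    - ((lam * κ : ℝ) : ℂ) * (2 * (π : ℂ) * Complex.I * η)
    + ((lam : ℝ) : ℂ) * (starRingEnd ℂ) (Bfun b η)

/-- Fourier transform `G(η, ξ, Δτ) = exp(Ψ(η, ξ) Δτ)` of the Green's function. -/
def Gfun (σZ σR ρ lam κ : ℝ) (b : ℝ → ℝ) (Δτ η ξ : ℝ) : ℂ :=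
  Complex.exp (Psi σZ σR ρ lam κ b η ξ * Δτ)

/-- `sin² x / x²`, interpreted as `1` at `x = 0`. -/
def sinc2 (x : ℝ) : ℝ := if x = 0 then 1 else Real.sin x ^ 2 / x ^ 2

/-- Trigonometric factor `tg(s, z)`. -/
def tg (Nd Kd : ℕ) (s z : ℤ) : ℝ := sinc2 (π * s / Nd) * sinc2 (π * z / Kd)

lemma sinc2_nonneg (x : ℝ) : 0 ≤ sinc2 x := by
  unfold sinc2; split
  · norm_num
  · exact div_nonneg (sq_nonneg _) (sq_nonneg _)

lemma sinc2_le_one (x : ℝ) : sinc2 x ≤ 1 := by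
  unfold sinc2; split
  · exact le_refl 1
  · next hx =>
      rw [div_le_one (by positivity)]
      exact Real.sin_sq_le_sq

lemma abs_Bfun_le (b : ℝ → ℝ) (η : ℝ) (hb0 : ∀ y, 0 ≤ b y) (hb1 : ∫ y : ℝ, b y = 1) :
    ‖Bfun b η‖ ≤ 1 := by
  have heq : ∀ y : ℝ, ‖(b y : ℂ) * Complex.exp (-(2 * (π : ℂ) * Complex.I * η * y))‖ = b y := by
    intro y
    rw [norm_mul, Complex.norm_exp]
    have : (-(2 * (π : ℂ) * Complex.I * η * y)).re = 0 := by simp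
    rw [this, Real.exp_zero, mul_one, Complex.norm_real, Real.norm_eq_abs, abs_of_nonneg (hb0 y)]
  calc ‖Bfun b η‖ = ‖Bfun b η‖ := rfl
    _ ≤ ∫ y : ℝ, ‖(b y : ℂ) * Complex.exp (-(2 * (π : ℂ) * Complex.I * η * y))‖ :=
        norm_integral_le_integral_norm _
    _ = ∫ y : ℝ, b y := by simp_rw [heq]
    _ = 1 := hb1

lemma re_Psi (σZ σR ρ lam κ : ℝ) (b : ℝ → ℝ) (η ξ : ℝ) :
    (Psi σZ σR ρ lam κ b η ξ).re =
      (-(σZ ^ 2 / 2) * (2 * π * η) ^ 2 - ρ * σZ * σR * (2 * π * η) * (2 * π * ξ)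
        - σR ^ 2 / 2 * (2 * π * ξ) ^ 2 - lam) + lam * (Bfun b η).re := by
  simp [Psi, Complex.add_re, Complex.sub_re, Complex.mul_re, ← Complex.ofReal_pow,
    ← Complex.ofReal_mul, ← Complex.ofReal_ofNat]

lemma re_Psi_le (σZ σR ρ lam κ : ℝ) (b : ℝ → ℝ) (η ξ : ℝ) (hlam : 0 ≤ lam)
    (hb0 : ∀ y, 0 ≤ b y) (hb1 : ∫ y : ℝ, b y = 1) :
    (Psi σZ σR ρ lam κ b η ξ).re ≤
      -(σZ ^ 2 / 2) * (2 * π * η) ^ 2 - ρ * σZ * σR * (2 * π * η) * (2 * π * ξ)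
        - σR ^ 2 / 2 * (2 * π * ξ) ^ 2 := by
  rw [re_Psi]
  have hBre : (Bfun b η).re ≤ 1 :=
    (Complex.re_le_norm _).trans (abs_Bfun_le b η hb0 hb1)
  have : lam * (Bfun b η).re ≤ lam * 1 := mul_le_mul_of_nonneg_left hBre hlam
  linarith

lemma quad_bound (σZ σR ρ : ℝ) (hρ : |ρ| < 1) (a v : ℝ) :
    -(σZ ^ 2 / 2) * a ^ 2 - ρ * σZ * σR * a * v - σR ^ 2 / 2 * v ^ 2
      ≤ -((1 - |ρ|) / 2 * min (σZ ^ 2) (σR ^ 2) * (a ^ 2 + v ^ 2)) := by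
  have h1 : -(|ρ| * |σZ * a| * |σR * v|) ≤ ρ * (σZ * a) * (σR * v) := by
    calc -(|ρ| * |σZ * a| * |σR * v|) = -|ρ * (σZ * a) * (σR * v)| := by
          rw [abs_mul (ρ * (σZ * a)) (σR * v), abs_mul ρ (σZ * a)]
      _ ≤ ρ * (σZ * a) * (σR * v) := neg_abs_le _
  have h2 : 2 * (|σZ * a| * |σR * v|) ≤ (σZ * a) ^ 2 + (σR * v) ^ 2 := by
    nlinarith [sq_nonneg (|σZ * a| - |σR * v|), sq_abs (σZ * a), sq_abs (σR * v)]
  have h3 : -(|ρ| * ((σZ * a) ^ 2 + (σR * v) ^ 2) / 2) ≤ ρ * (σZ * a) * (σR * v) := by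
    nlinarith [abs_nonneg ρ, h1, h2,
      mul_nonneg (abs_nonneg (σZ * a)) (abs_nonneg (σR * v))]
  have hm1 : min (σZ ^ 2) (σR ^ 2) * a ^ 2 ≤ σZ ^ 2 * a ^ 2 :=
    mul_le_mul_of_nonneg_right (min_le_left _ _) (sq_nonneg a)
  have hm2 : min (σZ ^ 2) (σR ^ 2) * v ^ 2 ≤ σR ^ 2 * v ^ 2 :=
    mul_le_mul_of_nonneg_right (min_le_right _ _) (sq_nonneg v)
  have hρ0 : 0 ≤ 1 - |ρ| := by linarith
  nlinarith [h3, hm1, hm2, mul_nonneg hρ0 (sub_nonneg.2 hm1),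
    mul_nonneg hρ0 (sub_nonneg.2 hm2)]

lemma summable_gauss (c : ℝ) (hc : 0 < c) :
    Summable fun n : ℤ => Real.exp (-(c * (n : ℝ) ^ 2)) := by
  have hnat : Summable fun n : ℕ => Real.exp (-(c * (n : ℝ) ^ 2)) := by
    refine Summable.of_nonneg_of_le (fun n => (Real.exp_pos _).le) (fun n => ?_)
      (summable_geometric_of_lt_one (Real.exp_pos (-c)).le
        (Real.exp_lt_one_iff.2 (by linarith)))
    rw [← Real.exp_nat_mul]
    apply Real.exp_le_exp.2
    have : (n : ℝ) ≤ (n : ℝ) ^ 2 := by exact_mod_cast Nat.le_self_pow two_ne_zero n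
    nlinarith
  apply Summable.of_nat_of_neg
  · exact hnat
  · convert hnat using 3 with n
    case e'_3 => rfl
    push_cast; ring_nf

set_option maxHeartbeats 1000000 in
/-- If `Δτ > 0`, the family `(s, z) ∈ ℤ² ↦ tg(s, z) |G(η_s, ξ_z, Δτ)|` is
absolutely summable. -/
theorem tg_G_abs_summable
    (σZ σR ρ lam κ Pd Qd Δτ : ℝ) (b : ℝ → ℝ) (Nd Kd : ℕ)
    (hσZ : 0 < σZ) (hσR : 0 < σR) (hρ : |ρ| < 1) (hlam : 0 ≤ lam)
    (hb0 : ∀ y, 0 ≤ b y) (hbint : Integrable b) (hb1 : ∫ y : ℝ, b y = 1)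
    (hPd : 0 < Pd) (hQd : 0 < Qd)
    (hNd : 0 < Nd) (hNde : Even Nd) (hKd : 0 < Kd) (hKde : Even Kd)
    (hΔτ : 0 < Δτ) :
    Summable (fun sz : ℤ × ℤ =>
      tg Nd Kd sz.1 sz.2 *
        ‖Gfun σZ σR ρ lam κ b Δτ (sz.1 / Pd) (sz.2 / Qd)‖) := by
  have hπ := Real.pi_pos
  have hm0 : 0 < min (σZ ^ 2) (σR ^ 2) := lt_min (by positivity) (by positivity)
  have hc : 0 < (1 - |ρ|) / 2 * min (σZ ^ 2) (σR ^ 2) := by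
    apply mul_pos _ hm0; linarith
  set c : ℝ := (1 - |ρ|) / 2 * min (σZ ^ 2) (σR ^ 2) with hcdef
  have hc1 : 0 < c * (2 * π / Pd) ^ 2 * Δτ := by positivity
  have hc2 : 0 < c * (2 * π / Qd) ^ 2 * Δτ := by positivity
  set c1 : ℝ := c * (2 * π / Pd) ^ 2 * Δτ with hc1def
  set c2 : ℝ := c * (2 * π / Qd) ^ 2 * Δτ with hc2def
  have key : ∀ sz : ℤ × ℤ,
      tg Nd Kd sz.1 sz.2 * ‖Gfun σZ σR ρ lam κ b Δτ (sz.1 / Pd) (sz.2 / Qd)‖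
        ≤ Real.exp (-(c1 * (sz.1 : ℝ) ^ 2)) * Real.exp (-(c2 * (sz.2 : ℝ) ^ 2)) := by
    rintro ⟨s, z⟩
    have hPsiRe : (Psi σZ σR ρ lam κ b ((s : ℝ) / Pd) ((z : ℝ) / Qd)).re ≤
        -(c * ((2 * π * ((s : ℝ) / Pd)) ^ 2 + (2 * π * ((z : ℝ) / Qd)) ^ 2)) :=
      (re_Psi_le σZ σR ρ lam κ b _ _ hlam hb0 hb1).trans (quad_bound σZ σR ρ hρ _ _)
    have hG : ‖Gfun σZ σR ρ lam κ b Δτ ((s : ℝ) / Pd) ((z : ℝ) / Qd)‖ =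
        Real.exp ((Psi σZ σR ρ lam κ b ((s : ℝ) / Pd) ((z : ℝ) / Qd)).re * Δτ) := by
      rw [Gfun, Complex.norm_exp]
      congr 1
      simp [Complex.mul_re]
    have hGle : ‖Gfun σZ σR ρ lam κ b Δτ ((s : ℝ) / Pd) ((z : ℝ) / Qd)‖
        ≤ Real.exp (-(c1 * (s : ℝ) ^ 2)) * Real.exp (-(c2 * (z : ℝ) ^ 2)) := by
      rw [hG, ← Real.exp_add]
      apply Real.exp_le_exp.2
      calc (Psi σZ σR ρ lam κ b ((s : ℝ) / Pd) ((z : ℝ) / Qd)).re * Δτ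
          ≤ -(c * ((2 * π * ((s : ℝ) / Pd)) ^ 2 + (2 * π * ((z : ℝ) / Qd)) ^ 2)) * Δτ :=
            mul_le_mul_of_nonneg_right hPsiRe hΔτ.le
        _ = -(c1 * (s : ℝ) ^ 2) + -(c2 * (z : ℝ) ^ 2) := by
            rw [hc1def, hc2def]
            field_simp
            ring
    have htg1 : tg Nd Kd s z ≤ 1 := by
      rw [tg]
      calc sinc2 (π * s / Nd) * sinc2 (π * z / Kd) ≤ 1 * 1 :=
          mul_le_mul (sinc2_le_one _) (sinc2_le_one _) (sinc2_nonneg _) zero_le_one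
        _ = 1 := by ring
    have htg0 : 0 ≤ tg Nd Kd s z := mul_nonneg (sinc2_nonneg _) (sinc2_nonneg _)
    calc tg Nd Kd s z * ‖Gfun σZ σR ρ lam κ b Δτ ((s : ℝ) / Pd) ((z : ℝ) / Qd)‖
        ≤ 1 * (Real.exp (-(c1 * (s : ℝ) ^ 2)) * Real.exp (-(c2 * (z : ℝ) ^ 2))) :=
          mul_le_mul htg1 hGle (norm_nonneg _) zero_le_one
      _ = Real.exp (-(c1 * (s : ℝ) ^ 2)) * Real.exp (-(c2 * (z : ℝ) ^ 2)) := one_mul _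
  refine Summable.of_nonneg_of_le (fun sz => ?_) key ?_
  · exact mul_nonneg (mul_nonneg (sinc2_nonneg _) (sinc2_nonneg _)) (norm_nonneg _)
  · exact Summable.mul_of_nonneg (summable_gauss c1 hc1) (summable_gauss c2 hc2)
      (fun n => (Real.exp_pos _).le) (fun n => (Real.exp_pos _).le)

end
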